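/- arXiv:2305.04866 — 3 statements merged into one kernel-verified Lean document; each statement's English description precedes it below -/
import Mathlib

section
/- Let S be a finite nonempty type with state distribution μ (μ s ≥ 0, ∑_s μ s = 1); for each i ∈ Fin n let A i be a finite nonempty type and π_i : ℝ → S → A i → ℝ a per-dimension parameterized policy (π_i θ s a > 0, ∑_{a ∈ A i} π_i θ s a = 1, θ ↦ π_i θ s a differentiable); let π θ s a = ∏_i π_i θ s (a i) be the product policy on tuples a ∈ Π i, A i. Fix i ∈ Fin n and let g : S → (Π i, A i) → ℝ be a function that does not depend on action dimension i (i.e., g s a = g s a' whenever a and a' agree at every coordinate ≠ i). Then for every θ: ∑_s μ s · ∑_a π θ s a · ((d/dθ) log (π_i θ s (a i))) · g s a = 0. That is, reward terms that an action dimension cannot affect contribute zero in expectation to that dimension's policy gradient. -/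
/-!
Fix the state and split an action tuple into its `i`-th coordinate `b` and the remaining
coordinates `c`. The product policy factors as `πᵢ(b)` times a weight depending on `c` alone,
and `g` does not see `b`, so the sum over `b` is the expected score `∑_b πᵢ(b) (log πᵢ(b))'`
times a factor independent of `b`. The expected score vanishes: it is the derivative of
`∑_b πᵢ(b) = 1`.
-/

open Finset Real

theorem mul_deriv_log_eq_deriv {f : ℝ → ℝ} {x : ℝ} (hf : DifferentiableAt ℝ f x)
    (hx : f x ≠ 0) : f x * deriv (fun y => log (f y)) x = deriv f x := by
  rw [deriv.log hf hx, mul_div_cancel₀ _ hx]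

theorem sum_mul_deriv_log_eq_zero {α : Type*} [Fintype α] {f : ℝ → α → ℝ} {c x : ℝ}
    (hsum : ∀ y, ∑ a, f y a = c) (hf : ∀ a, DifferentiableAt ℝ (fun y => f y a) x)
    (hx : ∀ a, f x a ≠ 0) :
    ∑ a, f x a * deriv (fun y => log (f y a)) x = 0 := by
  rw [Finset.sum_congr rfl fun a _ => mul_deriv_log_eq_deriv (hf a) (hx a),
    ← deriv_fun_sum fun a _ => hf a]
  simp only [hsum, deriv_const]

theorem sum_mul_eq_zero_of_forall_eq {α : Type*} [Fintype α] {w K : α → ℝ}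
    (hw : ∑ b, w b = 0) (hK : ∀ b b', K b = K b') : ∑ b, w b * K b = 0 := by
  rcases isEmpty_or_nonempty α with _ | ⟨⟨b₀⟩⟩
  · simp
  · rw [Finset.sum_congr rfl fun b _ => congrArg (w b * ·) (hK b b₀), ← Finset.sum_mul, hw,
      zero_mul]

theorem sum_prod_mul_mul_eq_zero {ι : Type*} [Fintype ι] [DecidableEq ι] {A : ι → Type*}
    [∀ k, Fintype (A k)] (p : ∀ k, A k → ℝ) (i : ι) (h : A i → ℝ) (G : (∀ k, A k) → ℝ)
    (hG : ∀ a a', (∀ k, k ≠ i → a k = a' k) → G a = G a')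
    (hzero : ∑ b, p i b * h b = 0) :
    ∑ a : ∀ k, A k, (∏ k, p k (a k)) * h (a i) * G a = 0 := by
  set e := (Equiv.piSplitAt i A).symm
  rw [← e.sum_comp, Fintype.sum_prod_type, Finset.sum_comm]
  refine Finset.sum_eq_zero fun c _ => ?_
  have he_i : ∀ b, e (b, c) i = b := by simp [e]
  have he_ne : ∀ b k (hk : k ≠ i), e (b, c) k = c ⟨k, hk⟩ := fun b k hk => by simp [e, hk]
  calc ∑ b, (∏ k, p k (e (b, c) k)) * h (e (b, c) i) * G (e (b, c))
      = ∑ b, p i b * h b * ((∏ k ∈ {i}ᶜ, p k (e (b, c) k)) * G (e (b, c))) := by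
        refine Finset.sum_congr rfl fun b _ => ?_
        rw [Fintype.prod_eq_mul_prod_compl i, he_i]
        ring
    _ = 0 := by
        refine sum_mul_eq_zero_of_forall_eq hzero fun b b' => ?_
        congr 1
        · refine Finset.prod_congr rfl fun k hk => ?_
          have hk : k ≠ i := by simpa using hk
          rw [he_ne b k hk, he_ne b' k hk]
        · exact hG _ _ fun k hk => by rw [he_ne b k hk, he_ne b' k hk]

theorem irrelevant_reward_zero_contribution_general {n : ℕ} {S : Type*}
    [Fintype S]
    {A : Fin n → Type*} [∀ i, Fintype (A i)]
    (μ : S → ℝ)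
    (πi : (i : Fin n) → ℝ → S → A i → ℝ)
    (hpos : ∀ i θ s a, 0 < πi i θ s a)
    (hsum : ∀ i θ s, ∑ a, πi i θ s a = 1)
    (hdiff : ∀ i s a, Differentiable ℝ (fun θ => πi i θ s a))
    (i : Fin n)
    (g : S → (∀ k, A k) → ℝ)
    (hg : ∀ s (a a' : ∀ k, A k), (∀ k, k ≠ i → a k = a' k) → g s a = g s a') :
    ∀ θ : ℝ,
      ∑ s, μ s * ∑ a : ∀ k, A k,
        (∏ k, πi k θ s (a k)) * deriv (fun θ' => Real.log (πi i θ' s (a i))) θ * g s a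
        = 0 := by
  intro θ
  refine Finset.sum_eq_zero fun s _ => ?_
  have hscore : ∑ b, πi i θ s b * deriv (fun θ' => log (πi i θ' s b)) θ = 0 :=
    sum_mul_deriv_log_eq_zero (hsum i · s) (fun b => (hdiff i s b).differentiableAt)
      fun b => (hpos i θ s b).ne'
  rw [sum_prod_mul_mul_eq_zero (fun k => πi k θ s) i _ (g s) (hg s) hscore, mul_zero]

/-- Reward terms that an action dimension cannot affect contribute zero in
expectation to that dimension's policy gradient. -/
theorem irrelevant_reward_zero_contribution {n : ℕ} {S : Type*}
    [Fintype S] [Nonempty S]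
    {A : Fin n → Type*} [∀ i, Fintype (A i)] [∀ i, Nonempty (A i)]
    (μ : S → ℝ)
    (hμ : ∀ s, 0 ≤ μ s)
    (hμsum : ∑ s, μ s = 1)
    (πi : (i : Fin n) → ℝ → S → A i → ℝ)
    (hpos : ∀ i θ s a, 0 < πi i θ s a)
    (hsum : ∀ i θ s, ∑ a, πi i θ s a = 1)
    (hdiff : ∀ i s a, Differentiable ℝ (fun θ => πi i θ s a))
    (i : Fin n)
    (g : S → (∀ k, A k) → ℝ)
    (hg : ∀ s (a a' : ∀ k, A k), (∀ k, k ≠ i → a k = a' k) → g s a = g s a') :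
    ∀ θ : ℝ,
      ∑ s, μ s * ∑ a : ∀ k, A k,
        (∏ k, πi k θ s (a k)) * deriv (fun θ' => Real.log (πi i θ' s (a i))) θ * g s a
        = 0 :=
  irrelevant_reward_zero_contribution_general μ πi hpos hsum hdiff i g hg
end

section
/- (Causal policy gradient is unbiased; discrete one-step form of Theorem 2.) Let S be a finite nonempty type with state distribution μ; for each i ∈ Fin n let A i be a finite nonempty type and π_i : ℝ → S → A i → ℝ a per-dimension parameterized policy (π_i θ s a > 0, ∑_{a ∈ A i} π_i θ s a = 1, θ ↦ π_i θ s a differentiable); let π θ s a = ∏_i π_i θ s (a i) be the product policy. Let r : Fin m → S → (Π i, A i) → ℝ be reward terms and let B : Fin n → Fin m → Bool be a correct causal matrix, i.e., B i j = false implies r j does not depend on action dimension i. Then for every θ: ∑_s μ s · ∑_a π θ s a · ∑_{i ∈ Fin n} ((d/dθ) log (π_i θ s (a i))) · (∑_{j : B i j = true} r j s a) = (d/dθ) (∑_s μ s · ∑_a π θ s a · ∑_{j ∈ Fin m} r j s a). -/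
/-!
Differentiating the product policy gives `∑ᵢ (∏_{k ≠ i} πₖ) · ∂πᵢ`, and multiplying the score
`∂ log πᵢ = ∂πᵢ / πᵢ` by `∏ₖ πₖ` gives the same `i`-th term, so the two sides differ only by the
terms `∑ₐ (∏_{k ≠ i} πₖ) · ∂πᵢ(aᵢ) · rⱼ(a)` with `B i j = false`. There `rⱼ` does not depend on
`aᵢ`, so summing over `aᵢ` first factors out `∑_{aᵢ} ∂πᵢ(aᵢ) = ∂(∑_{aᵢ} πᵢ(aᵢ)) = ∂1 = 0`.
-/

open Finset

section PiSum

variable {ι : Type*} [Fintype ι] [DecidableEq ι] {A : ι → Type*} [∀ i, Fintype (A i)]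
  {R : Type*} [CommSemiring R]

theorem sum_apply_mul_eq_zero_of_dependsOn_compl {i : ι} {G : A i → R} (hG : ∑ x, G x = 0)
    {H : (∀ k, A k) → R} (hH : DependsOn H {i}ᶜ) :
    ∑ a : ∀ k, A k, G (a i) * H a = 0 := by
  set e := Equiv.piSplitAt i A
  rw [← e.symm.sum_comp, Fintype.sum_prod_type, sum_comm]
  refine sum_eq_zero fun q _ => ?_
  rcases isEmpty_or_nonempty (A i) with hA | ⟨⟨x₀⟩⟩
  · simp
  · calc ∑ x, G (e.symm (x, q) i) * H (e.symm (x, q))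
        = ∑ x, G x * H (e.symm (x₀, q)) := by
          refine sum_congr rfl fun x _ => ?_
          congr 1
          · simp [e, Equiv.piSplitAt]
          · refine hH fun k hk => ?_
            simp [e, Equiv.piSplitAt, dif_neg (show k ≠ i from hk)]
      _ = 0 := by rw [← sum_mul, hG, zero_mul]

theorem sum_prod_erase_mul_eq_zero_of_dependsOn_compl (p : ∀ k, A k → R) {i : ι}
    {G : A i → R} (hG : ∑ x, G x = 0) {H : (∀ k, A k) → R} (hH : DependsOn H {i}ᶜ) :
    ∑ a : ∀ k, A k, (∏ k ∈ univ.erase i, p k (a k)) * G (a i) * H a = 0 := by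
  have hpH : DependsOn (fun a : ∀ k, A k => (∏ k ∈ univ.erase i, p k (a k)) * H a) {i}ᶜ :=
    fun a a' h => by
      dsimp only
      rw [hH h, prod_congr rfl fun k hk => by rw [h k (ne_of_mem_erase hk)]]
  rw [← sum_apply_mul_eq_zero_of_dependsOn_compl hG hpH]
  exact sum_congr rfl fun a _ => by ring

theorem sum_sum_prod_erase_mul_causal_eq {κ : Type*} [Fintype κ] (p d : ∀ k, A k → R)
    (hd : ∀ i, ∑ x, d i x = 0) (r : κ → (∀ k, A k) → R) (B : ι → κ → Bool)
    (hB : ∀ i j, B i j = false → DependsOn (r j) {i}ᶜ) :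
    ∑ a : ∀ k, A k, ∑ i, (∏ k ∈ univ.erase i, p k (a k)) * d i (a i) *
        ∑ j ∈ univ.filter (fun j => B i j = true), r j a
      = ∑ a : ∀ k, A k, (∑ i, (∏ k ∈ univ.erase i, p k (a k)) * d i (a i)) * ∑ j, r j a := by
  simp_rw [sum_mul]
  rw [sum_comm]
  conv_rhs => rw [sum_comm]
  refine sum_congr rfl fun i _ => ?_
  have hnoncausal : DependsOn (fun a => ∑ j ∈ univ.filter (fun j => ¬B i j = true), r j a)
      {i}ᶜ := fun a a' h =>
    sum_congr rfl fun j hj => hB i j (by simpa using (mem_filter.mp hj).2) h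
  have hzero := sum_prod_erase_mul_eq_zero_of_dependsOn_compl p (hd i) hnoncausal
  simp_rw [← sum_filter_add_sum_filter_not univ (fun j => B i j = true) (r · _), mul_add,
    sum_add_distrib, hzero, add_zero]

end PiSum

theorem sum_deriv_eq_zero_of_sum_eq_const {α : Type*} [Fintype α] {f : α → ℝ → ℝ} {θ c : ℝ}
    (hf : ∀ x, DifferentiableAt ℝ (f x) θ) (hsum : ∀ θ, ∑ x, f x θ = c) :
    ∑ x, deriv (f x) θ = 0 := by
  rw [← deriv_fun_sum fun x _ => hf x]
  simp [hsum]

theorem causal_policy_gradient_unbiased_general {n m : ℕ} {S : Type*}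
    [Fintype S]
    {A : Fin n → Type*} [∀ i, Fintype (A i)]
    (μ : S → ℝ)
    (πi : (i : Fin n) → ℝ → S → A i → ℝ)
    (hpos : ∀ i θ s a, 0 < πi i θ s a)
    (hsum : ∀ i θ s, ∑ a, πi i θ s a = 1)
    (hdiff : ∀ i s a, Differentiable ℝ (fun θ => πi i θ s a))
    (r : Fin m → S → (∀ k, A k) → ℝ)
    (B : Fin n → Fin m → Bool)
    (hB : ∀ i j, B i j = false →
      ∀ s (a a' : ∀ k, A k), (∀ k, k ≠ i → a k = a' k) → r j s a = r j s a') :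
    ∀ θ : ℝ,
      ∑ s, μ s * ∑ a : ∀ k, A k, (∏ k, πi k θ s (a k)) *
          ∑ i, deriv (fun θ' => Real.log (πi i θ' s (a i))) θ *
            (∑ j ∈ Finset.univ.filter (fun j => B i j = true), r j s a)
        = deriv (fun θ' =>
            ∑ s, μ s * ∑ a : ∀ k, A k, (∏ k, πi k θ' s (a k)) * ∑ j, r j s a) θ := by
  intro θ
  set d := fun i s x => deriv (fun θ' => πi i θ' s x) θ
  have hπ (i s x) : HasDerivAt (fun θ' => πi i θ' s x) (d i s x) θ := (hdiff i s x θ).hasDerivAt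
  have hprod (s) (a : ∀ k, A k) : HasDerivAt (fun θ' => ∏ k, πi k θ' s (a k))
      (∑ i, (∏ k ∈ univ.erase i, πi k θ s (a k)) * d i s (a i)) θ := by
    simpa using HasDerivAt.fun_finsetProd fun i _ => hπ i s (a i)
  have hJ := HasDerivAt.fun_sum (u := univ) fun s _ => (HasDerivAt.fun_sum (u := univ)
    fun a _ => (hprod s a).mul_const (∑ j, r j s a)).const_mul (μ s)
  rw [hJ.deriv]
  refine sum_congr rfl fun s _ => congrArg (μ s * ·) ?_
  rw [← sum_sum_prod_erase_mul_causal_eq _ _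
    (fun i => sum_deriv_eq_zero_of_sum_eq_const (fun x => hdiff i s x θ) (hsum i · s))
    _ B fun i j hij => hB i j hij s]
  refine sum_congr rfl fun a _ => ?_
  rw [mul_sum]
  refine sum_congr rfl fun i _ => ?_
  have hπi := (hpos i θ s (a i)).ne'
  rw [((hπ i s (a i)).log hπi).deriv, ← prod_erase_mul univ _ (mem_univ i)]
  field_simp
  ring

/-- Causal policy gradient is an unbiased estimator of the true policy
gradient (discrete one-step form of Theorem 2). -/
theorem causal_policy_gradient_unbiased {n m : ℕ} {S : Type*}
    [Fintype S] [Nonempty S]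
    {A : Fin n → Type*} [∀ i, Fintype (A i)] [∀ i, Nonempty (A i)]
    (μ : S → ℝ)
    (hμ : ∀ s, 0 ≤ μ s)
    (hμsum : ∑ s, μ s = 1)
    (πi : (i : Fin n) → ℝ → S → A i → ℝ)
    (hpos : ∀ i θ s a, 0 < πi i θ s a)
    (hsum : ∀ i θ s, ∑ a, πi i θ s a = 1)
    (hdiff : ∀ i s a, Differentiable ℝ (fun θ => πi i θ s a))
    (r : Fin m → S → (∀ k, A k) → ℝ)
    (B : Fin n → Fin m → Bool)
    (hB : ∀ i j, B i j = false →
      ∀ s (a a' : ∀ k, A k), (∀ k, k ≠ i → a k = a' k) → r j s a = r j s a') :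
    ∀ θ : ℝ,
      ∑ s, μ s * ∑ a : ∀ k, A k, (∏ k, πi k θ s (a k)) *
          ∑ i, deriv (fun θ' => Real.log (πi i θ' s (a i))) θ *
            (∑ j ∈ Finset.univ.filter (fun j => B i j = true), r j s a)
        = deriv (fun θ' =>
            ∑ s, μ s * ∑ a : ∀ k, A k, (∏ k, πi k θ' s (a k)) * ∑ j, r j s a) θ :=
  causal_policy_gradient_unbiased_general μ πi hpos hsum hdiff r B hB
end

section
/- (Factored policy gradient with multipliers; discrete one-step form of Proposition 1.) Let S be a finite nonempty type with state distribution μ; for each i ∈ Fin n let A i be a finite nonempty type and π_i : ℝ → S → A i → ℝ a per-dimension parameterized policy (π_i θ s a > 0, ∑_{a ∈ A i} π_i θ s a = 1, θ ↦ π_i θ s a differentiable); let π θ s a = ∏_i π_i θ s (a i). Let Ψ : Fin m → S → (Π i, A i) → ℝ be target functions, λ : Fin m → ℝ a vector of multipliers, and K : Fin n → Fin m → Bool a correct causal matrix, i.e., K i j = false implies Ψ j does not depend on action dimension i. Then for every θ: ∑_s μ s · ∑_a π θ s a · ∑_{i ∈ Fin n} ((d/dθ) log (π_i θ s (a i)))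 · (∑_{j : K i j = true} λ j · Ψ j s a) = (d/dθ) (∑_s μ s · ∑_a π θ s a · ∑_{j ∈ Fin m} λ j · Ψ j s a). -/
/-!
Differentiating the product policy gives the score identity
`∂θ (∏ₖ πₖ) = (∏ₖ πₖ) · ∑ᵢ ∂θ log πᵢ`, so the true gradient is the factored estimator with the
full target `∑ⱼ λⱼ Ψⱼ` in every dimension. Dropping from dimension `i` the targets that do not
depend on `aᵢ` changes nothing: such a term is `∑ₐ ∂θ πᵢ(aᵢ) · ∏_{k ≠ i} πₖ(aₖ) · g(a)` with
`g` constant in `aᵢ`, and summing over `aᵢ` first gives `∂θ ∑_b πᵢ(b) = ∂θ 1 = 0`.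
-/

open Finset Real

theorem sum_deriv_eq_zero_of_sum_const {𝕜 F β : Type*} [NontriviallyNormedField 𝕜]
    [NormedAddCommGroup F] [NormedSpace 𝕜 F] [Fintype β] {f : β → 𝕜 → F} {c : F} {x : 𝕜}
    (hsum : ∀ x, ∑ b, f b x = c) (hf : ∀ b, DifferentiableAt 𝕜 (f b) x) :
    ∑ b, deriv (f b) x = 0 := by
  rw [← deriv_fun_sum fun b _ => hf b]
  simp [hsum]

theorem deriv_prod_eq_prod_mul_sum_deriv_log {ι : Type*} [Fintype ι] {f : ι → ℝ → ℝ} {x : ℝ}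
    (hf : ∀ i, f i x ≠ 0) (hd : ∀ i, DifferentiableAt ℝ (f i) x) :
    deriv (fun x => ∏ i, f i x) x = (∏ i, f i x) * ∑ i, deriv (fun x => log (f i x)) x := by
  have hlog := logDeriv_prod (s := univ) (fun i _ => hf i) (fun i _ => hd i)
  simp only [logDeriv_apply] at hlog
  have hprod : ∏ i, f i x ≠ 0 := prod_ne_zero_iff.mpr fun i _ => hf i
  simp_rw [← Function.comp_def log, fun i => deriv_log_comp_eq_logDeriv (hd i) (hf i),
    logDeriv_apply, ← hlog, mul_div_cancel₀ _ hprod]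

section ProductPolicy

variable {ι : Type*} [Fintype ι] [DecidableEq ι] {A : ι → Type*} [∀ i, Fintype (A i)]

theorem sum_mul_eq_zero_of_dependsOn_compl {R : Type*} [NonUnitalNonAssocSemiring R] (i : ι)
    [Nonempty (A i)] {q : A i → R} (hq : ∑ b, q b = 0) {f : (∀ k, A k) → R} (hf : DependsOn f {i}ᶜ) :
    ∑ a, q (a i) * f a = 0 := by
  obtain ⟨b₀⟩ := ‹Nonempty (A i)›
  let e := Equiv.piSplitAt i A
  have hf_split : ∀ b g, f (e.symm (b, g)) = f (e.symm (b₀, g)) := fun b g =>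
    hf fun k hk => by simp [e, Equiv.piSplitAt, Set.mem_compl_singleton_iff.mp hk]
  calc ∑ a, q (a i) * f a = ∑ b, ∑ g, q b * f (e.symm (b, g)) := by
        rw [← e.symm.sum_comp, Fintype.sum_prod_type]
        simp [e]
    _ = (∑ b, q b) * ∑ g, f (e.symm (b₀, g)) := by simp_rw [hf_split, ← mul_sum, sum_mul]
    _ = 0 := by rw [hq, zero_mul]

theorem sum_prod_mul_deriv_log_mul_eq_zero (i : ι) [Nonempty (A i)] {p : ∀ k, ℝ → A k → ℝ}
    {θ : ℝ} (hpos : ∀ b, p i θ b ≠ 0) (hsum : ∀ θ, ∑ b, p i θ b = 1)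
    (hd : ∀ b, DifferentiableAt ℝ (p i · b) θ) {g : (∀ k, A k) → ℝ} (hg : DependsOn g {i}ᶜ) :
    ∑ a, (∏ k, p k θ (a k)) * deriv (fun θ => log (p i θ (a i))) θ * g a = 0 := by
  have hscore : ∀ a : ∀ k, A k, (∏ k, p k θ (a k)) * deriv (fun θ => log (p i θ (a i))) θ
      = deriv (p i · (a i)) θ * ∏ k ∈ univ.erase i, p k θ (a k) := fun a => by
    rw [← mul_prod_erase univ _ (mem_univ i), ← Function.comp_def log,
      deriv_log_comp_eq_logDeriv (hd _) (hpos _), logDeriv_apply]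
    field_simp [hpos (a i)]
  simp_rw [hscore, mul_assoc]
  refine sum_mul_eq_zero_of_dependsOn_compl i (sum_deriv_eq_zero_of_sum_const hsum hd) ?_
  intro a a' h
  dsimp only
  rw [hg h, prod_congr rfl fun k hk => by rw [h k (ne_of_mem_erase hk)]]

theorem sum_prod_mul_sum_deriv_log_mul_sub_eq_deriv [∀ k, Nonempty (A k)]
    {p : ∀ k, ℝ → A k → ℝ} {θ : ℝ} (hpos : ∀ k b, p k θ b ≠ 0)
    (hsum : ∀ k θ, ∑ b, p k θ b = 1) (hd : ∀ k b, DifferentiableAt ℝ (p k · b) θ)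
    (R : (∀ k, A k) → ℝ) (G : ι → (∀ k, A k) → ℝ) (hG : ∀ i, DependsOn (G i) {i}ᶜ) :
    ∑ a, (∏ k, p k θ (a k)) * ∑ i, deriv (fun θ => log (p i θ (a i))) θ * (R a - G i a)
      = deriv (fun θ => ∑ a, (∏ k, p k θ (a k)) * R a) θ := by
  have hbaseline : ∑ i, ∑ a, (∏ k, p k θ (a k)) * deriv (fun θ => log (p i θ (a i))) θ * G i a
      = 0 :=
    sum_eq_zero fun i _ =>
      sum_prod_mul_deriv_log_mul_eq_zero i (hpos i) (hsum i) (hd i) (hG i)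
  calc _ = ∑ a, (∏ k, p k θ (a k)) * (∑ i, deriv (fun θ => log (p i θ (a i))) θ) * R a
        - ∑ i, ∑ a, (∏ k, p k θ (a k)) * deriv (fun θ => log (p i θ (a i))) θ * G i a := by
        rw [sum_comm (γ := ι), ← sum_sub_distrib]
        refine sum_congr rfl fun a _ => ?_
        rw [mul_sum, mul_sum, sum_mul, ← sum_sub_distrib]
        exact sum_congr rfl fun i _ => by ring
    _ = ∑ a, deriv (fun θ => ∏ k, p k θ (a k)) θ * R a := by
        rw [hbaseline, sub_zero]
        refine sum_congr rfl fun a _ => ?_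
        rw [deriv_prod_eq_prod_mul_sum_deriv_log (fun k => hpos k _) (fun k => hd k _)]
    _ = _ := by
        rw [deriv_fun_sum fun a _ => ?_]
        · refine sum_congr rfl fun a _ => ?_
          rw [deriv_mul_const]
          fun_prop
        · have := fun k => hd k (a k)
          fun_prop

end ProductPolicy

theorem factored_policy_gradient_unbiased_general {n m : ℕ} {S : Type*}
    [Fintype S]
    {A : Fin n → Type*} [∀ i, Fintype (A i)] [∀ i, Nonempty (A i)]
    (μ : S → ℝ)
    (πi : (i : Fin n) → ℝ → S → A i → ℝ)
    (hpos : ∀ i θ s a, 0 < πi i θ s a)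
    (hsum : ∀ i θ s, ∑ a, πi i θ s a = 1)
    (hdiff : ∀ i s a, Differentiable ℝ (fun θ => πi i θ s a))
    (Ψ : Fin m → S → (∀ k, A k) → ℝ)
    (lam : Fin m → ℝ)
    (K : Fin n → Fin m → Bool)
    (hK : ∀ i j, K i j = false →
      ∀ s (a a' : ∀ k, A k), (∀ k, k ≠ i → a k = a' k) → Ψ j s a = Ψ j s a') :
    ∀ θ : ℝ,
      ∑ s, μ s * ∑ a : ∀ k, A k, (∏ k, πi k θ s (a k)) *
          ∑ i, deriv (fun θ' => Real.log (πi i θ' s (a i))) θ *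
            (∑ j ∈ Finset.univ.filter (fun j => K i j = true), lam j * Ψ j s a)
        = deriv (fun θ' =>
            ∑ s, μ s * ∑ a : ∀ k, A k, (∏ k, πi k θ' s (a k)) *
              ∑ j, lam j * Ψ j s a) θ := by
  intro θ
  have hdiffAt : ∀ s, DifferentiableAt ℝ
      (fun θ => ∑ a : ∀ k, A k, (∏ k, πi k θ s (a k)) * ∑ j, lam j * Ψ j s a) θ := fun s => by
    have := fun k b => hdiff k s b
    fun_prop
  have hnoncausal : ∀ s i, DependsOn
      (fun a => ∑ j ∈ univ.filter (fun j => ¬K i j = true), lam j * Ψ j s a) {i}ᶜ :=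
    fun s i a a' h => sum_congr rfl fun j hj => by
      rw [hK i j (by simpa using (mem_filter.mp hj).2) s a a' h]
  rw [deriv_fun_sum fun s _ => (hdiffAt s).const_mul (μ s)]
  refine sum_congr rfl fun s _ => ?_
  rw [deriv_const_mul _ (hdiffAt s), ← sum_prod_mul_sum_deriv_log_mul_sub_eq_deriv
    (fun k b => (hpos k θ s b).ne') (fun k θ => hsum k θ s)
    (fun k b => (hdiff k s b).differentiableAt) _ _ (hnoncausal s)]
  congr! 6 with a _ i
  exact eq_sub_of_add_eq (sum_filter_add_sum_filter_not _ _ _)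

/-- Factored policy gradient with multipliers is an unbiased estimator of the
gradient of the λ-weighted objective (discrete one-step form of Prop. 1). -/
theorem factored_policy_gradient_unbiased {n m : ℕ} {S : Type*}
    [Fintype S] [Nonempty S]
    {A : Fin n → Type*} [∀ i, Fintype (A i)] [∀ i, Nonempty (A i)]
    (μ : S → ℝ)
    (hμ : ∀ s, 0 ≤ μ s)
    (hμsum : ∑ s, μ s = 1)
    (πi : (i : Fin n) → ℝ → S → A i → ℝ)
    (hpos : ∀ i θ s a, 0 < πi i θ s a)
    (hsum : ∀ i θ s, ∑ a, πi i θ s a = 1)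
    (hdiff : ∀ i s a, Differentiable ℝ (fun θ => πi i θ s a))
    (Ψ : Fin m → S → (∀ k, A k) → ℝ)
    (lam : Fin m → ℝ)
    (K : Fin n → Fin m → Bool)
    (hK : ∀ i j, K i j = false →
      ∀ s (a a' : ∀ k, A k), (∀ k, k ≠ i → a k = a' k) → Ψ j s a = Ψ j s a') :
    ∀ θ : ℝ,
      ∑ s, μ s * ∑ a : ∀ k, A k, (∏ k, πi k θ s (a k)) *
          ∑ i, deriv (fun θ' => Real.log (πi i θ' s (a i))) θ *
            (∑ j ∈ Finset.univ.filter (fun j => K i j = true), lam j * Ψ j s a)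
        = deriv (fun θ' =>
            ∑ s, μ s * ∑ a : ∀ k, A k, (∏ k, πi k θ' s (a k)) *
              ∑ j, lam j * Ψ j s a) θ :=
  factored_policy_gradient_unbiased_general μ πi hpos hsum hdiff Ψ lam K hK
end
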